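/- arXiv:1503.06256 — 3 statements merged into one kernel-verified Lean document; each statement's English description precedes it below -/
import Mathlib

section
/- Suppose x,y ∈ 𝔭 satisfy Gx = λx with λ > 0 and [x,Gy] = 0. Then B₋(x,y) = (λ/2)[x,y], B₊(x,y) = -(λ/2)[x,y], B₊(x,x) = 0, the bracket [x,y] lies in 𝔭, and the curvature expression satisfies κ(x,y) = (λ/2)·Q([x,y],[x,y]) + (λ²/4)·Q(G⁻¹[x,y],[x,y]) - (3/4)·Q(G[x,y],[x,y]). -/
/-- `B₊(x,y) = (1/2)([x,Gy] - [Gx,y])`. -/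
noncomputable def Bplus {𝔨 : Type*} [LieRing 𝔨] [LieAlgebra ℝ 𝔨]
    {𝔭 : Submodule ℝ 𝔨} (G : 𝔭 →ₗ[ℝ] 𝔭) (x y : 𝔭) : 𝔨 :=
  (1/2 : ℝ) • (⁅(x : 𝔨), (G y : 𝔨)⁆ - ⁅(G x : 𝔨), (y : 𝔨)⁆)

/-- `B₋(x,y) = (1/2)([x,Gy] + [Gx,y])`. -/
noncomputable def Bminus {𝔨 : Type*} [LieRing 𝔨] [LieAlgebra ℝ 𝔨]
    {𝔭 : Submodule ℝ 𝔨} (G : 𝔭 →ₗ[ℝ] 𝔭) (x y : 𝔭) : 𝔨 :=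
  (1/2 : ℝ) • (⁅(x : 𝔨), (G y : 𝔨)⁆ + ⁅(G x : 𝔨), (y : 𝔨)⁆)

/-- The curvature expression
`κ(x,y) = Q(B₋(x,y),[x,y]) - (3/4)·Q(G(P[x,y]), P[x,y]) + Q(B₊(x,y), G⁻¹(P(B₊(x,y))))
          - Q(B₊(x,x), G⁻¹(P(B₊(y,y))))`. -/
noncomputable def kappa {𝔨 : Type*} [LieRing 𝔨] [LieAlgebra ℝ 𝔨]
    (Q : 𝔨 →ₗ[ℝ] 𝔨 →ₗ[ℝ] ℝ) {𝔭 : Submodule ℝ 𝔨} (P : 𝔨 →ₗ[ℝ] 𝔭)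
    (G Ginv : 𝔭 →ₗ[ℝ] 𝔭) (x y : 𝔭) : ℝ :=
  Q (Bminus G x y) ⁅(x : 𝔨), (y : 𝔨)⁆
    - (3/4) * Q (G (P ⁅(x : 𝔨), (y : 𝔨)⁆) : 𝔨) (P ⁅(x : 𝔨), (y : 𝔨)⁆ : 𝔨)
    + Q (Bplus G x y) (Ginv (P (Bplus G x y)) : 𝔨)
    - Q (Bplus G x x) (Ginv (P (Bplus G y y)) : 𝔨)

/-! Since `[x, Gy] = 0` and `Gx = λx`, both `B₊(x,y)` and `B₋(x,y)` are multiples of `[x,y]`.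
The bracket `[x,y]` is orthogonal to `𝔥`: for `v ∈ 𝔥` the vector `u = [v,x]` lies in `𝔭` and is again
a `λ`-eigenvector of `G`, because `G` commutes with `ad 𝔥`; hence by ad-invariance and self-adjointness
`λ·Q([x,y],v) = λ·Q(y,u) = Q(Gy,u) = -Q([x,Gy],v) = 0`. With `P[x,y] = [x,y]` the curvature
expression then collapses to the stated formula. -/

section Brackets

variable {𝔨 : Type*} [LieRing 𝔨] [LieAlgebra ℝ 𝔨] {𝔭 : Submodule ℝ 𝔨} {G : 𝔭 →ₗ[ℝ] 𝔭}
  {x y : 𝔭} {lam : ℝ}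

theorem coe_apply_eq_smul_of_apply_eq_smul (hx : G x = lam • x) :
    (G x : 𝔨) = lam • (x : 𝔨) := by
  rw [hx, Submodule.coe_smul]

theorem Bminus_eq_of_apply_eq_smul (hx : G x = lam • x) (hxGy : ⁅(x : 𝔨), (G y : 𝔨)⁆ = 0) :
    Bminus G x y = (lam / 2) • ⁅(x : 𝔨), (y : 𝔨)⁆ := by
  rw [Bminus, hxGy, coe_apply_eq_smul_of_apply_eq_smul hx, zero_add, smul_lie, smul_smul]
  ring_nf

theorem Bplus_eq_of_apply_eq_smul (hx : G x = lam • x) (hxGy : ⁅(x : 𝔨), (G y : 𝔨)⁆ = 0) :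
    Bplus G x y = -((lam / 2) • ⁅(x : 𝔨), (y : 𝔨)⁆) := by
  rw [Bplus, hxGy, coe_apply_eq_smul_of_apply_eq_smul hx, zero_sub, smul_lie, smul_neg, smul_smul]
  ring_nf

theorem Bplus_self_eq_zero_of_apply_eq_smul (hx : G x = lam • x) : Bplus G x x = 0 := by
  rw [Bplus, coe_apply_eq_smul_of_apply_eq_smul hx, lie_smul, smul_lie, sub_self, smul_zero]

end Brackets

section InvariantForm

variable {𝔨 : Type*} [LieRing 𝔨] [LieAlgebra ℝ 𝔨] {Q : 𝔨 →ₗ[ℝ] 𝔨 →ₗ[ℝ] ℝ}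
  {𝔥 : LieSubalgebra ℝ 𝔨} {𝔭 : Submodule ℝ 𝔨}

theorem lie_mem_of_mem_orthogonal (hQad : ∀ z x y : 𝔨, Q ⁅z, x⁆ y = - Q x ⁅z, y⁆)
    (h𝔭 : ∀ x : 𝔨, x ∈ 𝔭 ↔ ∀ v ∈ 𝔥, Q x v = 0) {v p : 𝔨} (hv : v ∈ 𝔥) (hp : p ∈ 𝔭) :
    ⁅v, p⁆ ∈ 𝔭 := by
  rw [h𝔭]
  intro w hw
  rw [hQad, (h𝔭 p).mp hp _ (𝔥.lie_mem hv hw), neg_zero]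

theorem apply_lie_eq_smul_of_apply_eq_smul {P : 𝔨 →ₗ[ℝ] 𝔭} (hP₁ : ∀ x : 𝔭, P (x : 𝔨) = x)
    {G : 𝔭 →ₗ[ℝ] 𝔭} (hGad : ∀ v ∈ 𝔥, ∀ x : 𝔭, G (P ⁅v, (x : 𝔨)⁆) = P ⁅v, (G x : 𝔨)⁆)
    {v : 𝔨} (hv : v ∈ 𝔥) {x : 𝔭} {lam : ℝ} (hx : G x = lam • x) (hvx : ⁅v, (x : 𝔨)⁆ ∈ 𝔭) :
    G ⟨⁅v, (x : 𝔨)⁆, hvx⟩ = lam • ⟨⁅v, (x : 𝔨)⁆, hvx⟩ := by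
  have hP : P ⁅v, (x : 𝔨)⁆ = ⟨⁅v, (x : 𝔨)⁆, hvx⟩ := hP₁ ⟨_, hvx⟩
  have h := hGad v hv x
  rwa [hP, coe_apply_eq_smul_of_apply_eq_smul hx, lie_smul, map_smul, hP] at h

theorem lie_mem_of_apply_eq_smul (hQad : ∀ z x y : 𝔨, Q ⁅z, x⁆ y = - Q x ⁅z, y⁆)
    (h𝔭 : ∀ x : 𝔨, x ∈ 𝔭 ↔ ∀ v ∈ 𝔥, Q x v = 0)
    {P : 𝔨 →ₗ[ℝ] 𝔭} (hP₁ : ∀ x : 𝔭, P (x : 𝔨) = x) {G : 𝔭 →ₗ[ℝ] 𝔭}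
    (hGsa : ∀ x y : 𝔭, Q (G x : 𝔨) (y : 𝔨) = Q (x : 𝔨) (G y : 𝔨))
    (hGad : ∀ v ∈ 𝔥, ∀ x : 𝔭, G (P ⁅v, (x : 𝔨)⁆) = P ⁅v, (G x : 𝔨)⁆)
    {x y : 𝔭} {lam : ℝ} (hlam : lam ≠ 0) (hx : G x = lam • x)
    (hxGy : ⁅(x : 𝔨), (G y : 𝔨)⁆ = 0) :
    ⁅(x : 𝔨), (y : 𝔨)⁆ ∈ 𝔭 := by
  rw [h𝔭]
  intro v hv
  have hvx : ⁅v, (x : 𝔨)⁆ ∈ 𝔭 := lie_mem_of_mem_orthogonal hQad h𝔭 hv x.2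
  set u : 𝔭 := ⟨⁅v, (x : 𝔨)⁆, hvx⟩
  have hGu : (G u : 𝔨) = lam • (u : 𝔨) := coe_apply_eq_smul_of_apply_eq_smul
    (apply_lie_eq_smul_of_apply_eq_smul hP₁ hGad hv hx hvx)
  have hxv : ⁅(x : 𝔨), v⁆ = -(u : 𝔨) := (lie_skew _ _).symm
  have hyu : lam * Q (y : 𝔨) (u : 𝔨) = 0 := by
    calc lam * Q (y : 𝔨) (u : 𝔨) = Q (G y : 𝔨) (u : 𝔨) := by
          rw [hGsa, hGu, map_smul, smul_eq_mul]
      _ = Q ⁅(x : 𝔨), (G y : 𝔨)⁆ v := by rw [hQad, hxv, map_neg, neg_neg]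
      _ = 0 := by rw [hxGy, map_zero, LinearMap.zero_apply]
  rw [hQad, hxv, map_neg, (mul_eq_zero.mp hyu).resolve_left hlam, neg_zero, neg_zero]

end InvariantForm

theorem kappa_formula_of_smallest_eigenvector_general
    (𝔨 : Type*) [LieRing 𝔨] [LieAlgebra ℝ 𝔨]
    (Q : 𝔨 →ₗ[ℝ] 𝔨 →ₗ[ℝ] ℝ)
    (hQsymm : ∀ x y : 𝔨, Q x y = Q y x)
    (hQad : ∀ z x y : 𝔨, Q ⁅z, x⁆ y = - Q x ⁅z, y⁆)
    (𝔥 : LieSubalgebra ℝ 𝔨)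
    (𝔭 : Submodule ℝ 𝔨) (h𝔭 : ∀ x : 𝔨, x ∈ 𝔭 ↔ ∀ v ∈ 𝔥, Q x v = 0)
    (P : 𝔨 →ₗ[ℝ] 𝔭) (hP₁ : ∀ x : 𝔭, P (x : 𝔨) = x)
    (G : 𝔭 →ₗ[ℝ] 𝔭)
    (hGsa : ∀ x y : 𝔭, Q (G x : 𝔨) (y : 𝔨) = Q (x : 𝔨) (G y : 𝔨))
    (hGad : ∀ v ∈ 𝔥, ∀ x : 𝔭, G (P ⁅v, (x : 𝔨)⁆) = P ⁅v, (G x : 𝔨)⁆)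
    (Ginv : 𝔭 →ₗ[ℝ] 𝔭)
    (x y : 𝔭) (lam : ℝ) (hlam : 0 < lam)
    (hx : G x = lam • x) (hxGy : ⁅(x : 𝔨), (G y : 𝔨)⁆ = 0) :
    Bminus G x y = (lam/2) • ⁅(x : 𝔨), (y : 𝔨)⁆ ∧
    Bplus G x y = -((lam/2) • ⁅(x : 𝔨), (y : 𝔨)⁆) ∧
    Bplus G x x = 0 ∧
    ⁅(x : 𝔨), (y : 𝔨)⁆ ∈ 𝔭 ∧
    kappa Q P G Ginv x y
      = (lam/2) * Q ⁅(x : 𝔨), (y : 𝔨)⁆ ⁅(x : 𝔨), (y : 𝔨)⁆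
        + (lam^2/4) * Q (Ginv (P ⁅(x : 𝔨), (y : 𝔨)⁆) : 𝔨) ⁅(x : 𝔨), (y : 𝔨)⁆
        - (3/4) * Q (G (P ⁅(x : 𝔨), (y : 𝔨)⁆) : 𝔨) ⁅(x : 𝔨), (y : 𝔨)⁆ := by
  have hBm := Bminus_eq_of_apply_eq_smul hx hxGy
  have hBp := Bplus_eq_of_apply_eq_smul hx hxGy
  have hBxx := Bplus_self_eq_zero_of_apply_eq_smul hx
  have hmem := lie_mem_of_apply_eq_smul hQad h𝔭 hP₁ hGsa hGad hlam.ne' hx hxGy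
  refine ⟨hBm, hBp, hBxx, hmem, ?_⟩
  have hP : (P ⁅(x : 𝔨), (y : 𝔨)⁆ : 𝔨) = ⁅(x : 𝔨), (y : 𝔨)⁆ := by rw [hP₁ ⟨_, hmem⟩]
  rw [kappa, hBm, hBp, hBxx, hP, hQsymm (Ginv _ : 𝔨)]
  simp only [map_neg, map_smul, map_zero, Submodule.coe_neg, Submodule.coe_smul,
    LinearMap.neg_apply, LinearMap.smul_apply, LinearMap.zero_apply, smul_eq_mul]
  ring

/-- Suppose `x,y ∈ 𝔭` satisfy `Gx = λx` with `λ > 0` and `[x,Gy] = 0`.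
Then `B₋(x,y) = (λ/2)[x,y]`, `B₊(x,y) = -(λ/2)[x,y]`, `B₊(x,x) = 0`, the bracket `[x,y]`
lies in `𝔭`, and
`κ(x,y) = (λ/2)·Q([x,y],[x,y]) + (λ²/4)·Q(G⁻¹[x,y],[x,y]) - (3/4)·Q(G[x,y],[x,y])`. -/
theorem kappa_formula_of_smallest_eigenvector
    (𝔨 : Type*) [LieRing 𝔨] [LieAlgebra ℝ 𝔨] [FiniteDimensional ℝ 𝔨]
    (Q : 𝔨 →ₗ[ℝ] 𝔨 →ₗ[ℝ] ℝ)
    (hQsymm : ∀ x y : 𝔨, Q x y = Q y x)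
    (hQpos : ∀ x : 𝔨, x ≠ 0 → 0 < Q x x)
    (hQad : ∀ z x y : 𝔨, Q ⁅z, x⁆ y = - Q x ⁅z, y⁆)
    (𝔥 : LieSubalgebra ℝ 𝔨)
    (𝔭 : Submodule ℝ 𝔨) (h𝔭 : ∀ x : 𝔨, x ∈ 𝔭 ↔ ∀ v ∈ 𝔥, Q x v = 0)
    (P : 𝔨 →ₗ[ℝ] 𝔭) (hP₁ : ∀ x : 𝔭, P (x : 𝔨) = x) (hP₂ : ∀ x : 𝔨, x - (P x : 𝔨) ∈ 𝔥)
    (G : 𝔭 →ₗ[ℝ] 𝔭)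
    (hGsa : ∀ x y : 𝔭, Q (G x : 𝔨) (y : 𝔨) = Q (x : 𝔨) (G y : 𝔨))
    (hGpd : ∀ x : 𝔭, x ≠ 0 → 0 < Q (G x : 𝔨) (x : 𝔨))
    (hGad : ∀ v ∈ 𝔥, ∀ x : 𝔭, G (P ⁅v, (x : 𝔨)⁆) = P ⁅v, (G x : 𝔨)⁆)
    (Ginv : 𝔭 →ₗ[ℝ] 𝔭) (hGinv : ∀ x : 𝔭, Ginv (G x) = x ∧ G (Ginv x) = x)
    (x y : 𝔭) (lam : ℝ) (hlam : 0 < lam)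
    (hx : G x = lam • x) (hxGy : ⁅(x : 𝔨), (G y : 𝔨)⁆ = 0) :
    Bminus G x y = (lam/2) • ⁅(x : 𝔨), (y : 𝔨)⁆ ∧
    Bplus G x y = -((lam/2) • ⁅(x : 𝔨), (y : 𝔨)⁆) ∧
    Bplus G x x = 0 ∧
    ⁅(x : 𝔨), (y : 𝔨)⁆ ∈ 𝔭 ∧
    kappa Q P G Ginv x y
      = (lam/2) * Q ⁅(x : 𝔨), (y : 𝔨)⁆ ⁅(x : 𝔨), (y : 𝔨)⁆
        + (lam^2/4) * Q (Ginv (P ⁅(x : 𝔨), (y : 𝔨)⁆) : 𝔨) ⁅(x : 𝔨), (y : 𝔨)⁆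
        - (3/4) * Q (G (P ⁅(x : 𝔨), (y : 𝔨)⁆) : 𝔨) ⁅(x : 𝔨), (y : 𝔨)⁆ :=
  kappa_formula_of_smallest_eigenvector_general 𝔨 Q hQsymm hQad 𝔥 𝔭 h𝔭 P hP₁ G hGsa hGad Ginv x y
    lam hlam hx hxGy
end

section
/- Suppose λ > 0 is the smallest eigenvalue of G in the sense that Q(Gu,u) ≥ λ·Q(u,u) for all u ∈ 𝔭, and let x ∈ 𝔭 satisfy Gx = λx. If z ∈ 𝔭 is linearly independent from x with [x,z] = 0 and we set y = G⁻¹z, then x and y are linearly independent and κ(x,y) ≤ 0. (In the paper's formulation: x and y generate a plane of non-positive curvature in K/H.) -/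
/-!
Write `y = G⁻¹z`, so that `[x,Gy] = [x,z] = 0` and `[Gx,y] = λ[x,y]`. Then `B₋(x,y) = (λ/2)[x,y]`,
`B₊(x,y) = -(λ/2)[x,y]` and `B₊(x,x) = 0`. The bracket `w = [x,y]` already lies in `𝔭`: for
`v ∈ 𝔥`, ad-invariance and the `𝔥`-equivariance of `G` give `λ·Q([x,y],v) = Q([x,Gy],v) = 0`.
Hence `κ(x,y) = (λ/2)Q(w,w) - (3/4)Q(Gw,w) + (λ²/4)Q(w,G⁻¹w)`, and the bounds `G ≥ λ` and
`G⁻¹ ≤ 1/λ` make this at most `(λ/2 - 3λ/4 + λ/4)Q(w,w) = 0`.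
-/

theorem LinearIndependent.pair_of_apply_eq_smul {K M : Type*} [Field K] [AddCommGroup M]
    [Module K M] (f : M →ₗ[K] M) {x y z : M} {lam : K} (hlam : lam ≠ 0)
    (hx : f x = lam • x) (hy : f y = z) (hxz : LinearIndependent K ![x, z]) :
    LinearIndependent K ![x, y] := by
  refine LinearIndependent.of_comp f ?_
  have hfxy : f ∘ ![x, y] = ![lam • x, (1 : K) • z] := by
    ext i
    fin_cases i <;> simp [hx, hy]
  rwa [hfxy, LinearIndependent.pair_smul_smul_iff (Ne.isUnit hlam) isUnit_one]

section BilinForm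

variable {E : Type*} [AddCommGroup E] [Module ℝ E] (Q : E →ₗ[ℝ] E →ₗ[ℝ] ℝ)

theorem mul_apply_le_apply_self_of_mul_apply_self_le (hQsymm : ∀ a b : E, Q a b = Q b a)
    (hQnn : ∀ a : E, 0 ≤ Q a a) {lam : ℝ} (hlam : 0 ≤ lam) {p q : E}
    (h : lam * Q q q ≤ Q p q) : lam * Q p q ≤ Q p p := by
  have hsq : 0 ≤ lam ^ 2 * Q q q - 2 * lam * Q p q + Q p p := by
    have := hQnn (lam • q - p)
    simp only [map_sub, map_smul, LinearMap.sub_apply, LinearMap.smul_apply, smul_eq_mul,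
      hQsymm q p] at this
    linarith
  nlinarith [mul_le_mul_of_nonneg_left h hlam]

theorem mul_apply_inv_le_apply_self (hQsymm : ∀ a b : E, Q a b = Q b a)
    (hQnn : ∀ a : E, 0 ≤ Q a a) {𝔭 : Submodule ℝ E} {G Ginv : 𝔭 →ₗ[ℝ] 𝔭}
    (hGinv : ∀ a : 𝔭, G (Ginv a) = a) {lam : ℝ} (hlam : 0 ≤ lam)
    (hmin : ∀ u : 𝔭, lam * Q u u ≤ Q (G u) u) (w : 𝔭) : lam * Q w (Ginv w) ≤ Q w w :=
  mul_apply_le_apply_self_of_mul_apply_self_le Q hQsymm hQnn hlam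
    (by simpa only [hGinv] using hmin (Ginv w))

end BilinForm

section HomogeneousSpace

variable {𝔨 : Type*} [LieRing 𝔨] [LieAlgebra ℝ 𝔨] (Q : 𝔨 →ₗ[ℝ] 𝔨 →ₗ[ℝ] ℝ)
  {𝔥 : LieSubalgebra ℝ 𝔨} {𝔭 : Submodule ℝ 𝔨}

theorem apply_proj_eq_apply (hperp : ∀ a ∈ 𝔭, ∀ v ∈ 𝔥, Q a v = 0) {P : 𝔨 →ₗ[ℝ] 𝔭}
    (hP : ∀ b : 𝔨, b - (P b : 𝔨) ∈ 𝔥) (a : 𝔭) (b : 𝔨) : Q a (P b) = Q a b := by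
  have := hperp a a.2 _ (hP b)
  rw [map_sub] at this
  linarith

/-- The `𝔭`-component of `[v,x]` is again a `λ`-eigenvector of `G`, so self-adjointness lets `G`
pass from `y` onto it. -/
theorem mul_apply_lie_eq_apply_lie_of_eigenvector
    (hQad : ∀ z x y : 𝔨, Q ⁅z, x⁆ y = - Q x ⁅z, y⁆)
    (hperp : ∀ a ∈ 𝔭, ∀ v ∈ 𝔥, Q a v = 0)
    {P : 𝔨 →ₗ[ℝ] 𝔭} (hP : ∀ b : 𝔨, b - (P b : 𝔨) ∈ 𝔥) {G : 𝔭 →ₗ[ℝ] 𝔭}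
    (hGsa : ∀ x y : 𝔭, Q (G x : 𝔨) (y : 𝔨) = Q (x : 𝔨) (G y : 𝔨))
    (hGad : ∀ v ∈ 𝔥, ∀ x : 𝔭, G (P ⁅v, (x : 𝔨)⁆) = P ⁅v, (G x : 𝔨)⁆)
    {lam : ℝ} {x : 𝔭} (hx : G x = lam • x) (y : 𝔭) {v : 𝔨} (hv : v ∈ 𝔥) :
    lam * Q ⁅(x : 𝔨), (y : 𝔨)⁆ v = Q ⁅(x : 𝔨), (G y : 𝔨)⁆ v := by
  have hpair : ∀ a : 𝔭, Q ⁅(x : 𝔨), (a : 𝔨)⁆ v = Q a (P ⁅v, (x : 𝔨)⁆) := fun a => by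
    rw [apply_proj_eq_apply Q hperp hP, hQad, ← lie_skew v, map_neg]
  have heigen : G (P ⁅v, (x : 𝔨)⁆) = lam • P ⁅v, (x : 𝔨)⁆ := by
    rw [hGad v hv, hx, Submodule.coe_smul, lie_smul, map_smul]
  rw [hpair, hpair, hGsa, heigen, Submodule.coe_smul, map_smul, smul_eq_mul]

theorem lie_mem_of_lie_apply_eq_zero (hQad : ∀ z x y : 𝔨, Q ⁅z, x⁆ y = - Q x ⁅z, y⁆)
    (h𝔭 : ∀ x : 𝔨, x ∈ 𝔭 ↔ ∀ v ∈ 𝔥, Q x v = 0)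
    {P : 𝔨 →ₗ[ℝ] 𝔭} (hP : ∀ b : 𝔨, b - (P b : 𝔨) ∈ 𝔥) {G : 𝔭 →ₗ[ℝ] 𝔭}
    (hGsa : ∀ x y : 𝔭, Q (G x : 𝔨) (y : 𝔨) = Q (x : 𝔨) (G y : 𝔨))
    (hGad : ∀ v ∈ 𝔥, ∀ x : 𝔭, G (P ⁅v, (x : 𝔨)⁆) = P ⁅v, (G x : 𝔨)⁆)
    {lam : ℝ} (hlam : lam ≠ 0) {x y : 𝔭} (hx : G x = lam • x)
    (hxy : ⁅(x : 𝔨), (G y : 𝔨)⁆ = 0) : ⁅(x : 𝔨), (y : 𝔨)⁆ ∈ 𝔭 := by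
  refine (h𝔭 _).2 fun v hv => ?_
  have h := mul_apply_lie_eq_apply_lie_of_eigenvector Q hQad (fun a => (h𝔭 a).1) hP hGsa hGad
    hx y hv
  rw [hxy, map_zero, LinearMap.zero_apply] at h
  exact (mul_eq_zero.1 h).resolve_left hlam

theorem kappa_eq_of_lie_apply_eq_zero {P : 𝔨 →ₗ[ℝ] 𝔭} (hP : ∀ a : 𝔭, P (a : 𝔨) = a)
    (G Ginv : 𝔭 →ₗ[ℝ] 𝔭) {lam : ℝ} {x y : 𝔭} (hx : G x = lam • x)
    (hxy : ⁅(x : 𝔨), (G y : 𝔨)⁆ = 0) (w : 𝔭) (hw : (w : 𝔨) = ⁅(x : 𝔨), (y : 𝔨)⁆) :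
    kappa Q P G Ginv x y
      = lam / 2 * Q w w - 3 / 4 * Q (G w) w + lam ^ 2 / 4 * Q w (Ginv w) := by
  have hGx : ⁅(G x : 𝔨), (y : 𝔨)⁆ = lam • ⁅(x : 𝔨), (y : 𝔨)⁆ := by
    rw [hx, Submodule.coe_smul, smul_lie]
  have hBminus : Bminus G x y = (lam / 2) • ⁅(x : 𝔨), (y : 𝔨)⁆ := by
    rw [Bminus, hxy, hGx, zero_add, smul_smul, one_div, inv_mul_eq_div]
  have hBplus : Bplus G x y = -(lam / 2) • ⁅(x : 𝔨), (y : 𝔨)⁆ := by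
    rw [Bplus, hxy, hGx, zero_sub, smul_neg, smul_smul, one_div, inv_mul_eq_div, neg_smul]
  have hBplus_self : Bplus G x x = 0 := by
    rw [Bplus, hx, Submodule.coe_smul, lie_smul, smul_lie, sub_self, smul_zero]
  rw [kappa, hBminus, hBplus, hBplus_self, ← hw, hP]
  simp only [map_smul, map_zero, hP, Submodule.coe_smul, LinearMap.smul_apply,
    LinearMap.zero_apply, smul_eq_mul]
  ring

theorem kappa_nonpos_of_lie_apply_eq_zero (hQsymm : ∀ a b : 𝔨, Q a b = Q b a)
    (hQnn : ∀ a : 𝔨, 0 ≤ Q a a) {P : 𝔨 →ₗ[ℝ] 𝔭} (hP : ∀ a : 𝔭, P (a : 𝔨) = a)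
    {G Ginv : 𝔭 →ₗ[ℝ] 𝔭} (hGinv : ∀ a : 𝔭, G (Ginv a) = a) {lam : ℝ} (hlam : 0 ≤ lam)
    (hmin : ∀ u : 𝔭, lam * Q u u ≤ Q (G u) u) {x y : 𝔭} (hx : G x = lam • x)
    (hxy : ⁅(x : 𝔨), (G y : 𝔨)⁆ = 0) (hw : ⁅(x : 𝔨), (y : 𝔨)⁆ ∈ 𝔭) :
    kappa Q P G Ginv x y ≤ 0 := by
  rw [kappa_eq_of_lie_apply_eq_zero Q hP G Ginv hx hxy ⟨_, hw⟩ rfl]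
  nlinarith [hmin ⟨_, hw⟩, mul_apply_inv_le_apply_self Q hQsymm hQnn hGinv hlam hmin ⟨_, hw⟩]

end HomogeneousSpace

theorem kappa_nonpos_of_smallest_eigenvector_general
    (𝔨 : Type*) [LieRing 𝔨] [LieAlgebra ℝ 𝔨]
    (Q : 𝔨 →ₗ[ℝ] 𝔨 →ₗ[ℝ] ℝ)
    (hQsymm : ∀ x y : 𝔨, Q x y = Q y x)
    (hQpos : ∀ x : 𝔨, x ≠ 0 → 0 < Q x x)
    (hQad : ∀ z x y : 𝔨, Q ⁅z, x⁆ y = - Q x ⁅z, y⁆)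
    (𝔥 : LieSubalgebra ℝ 𝔨)
    (𝔭 : Submodule ℝ 𝔨) (h𝔭 : ∀ x : 𝔨, x ∈ 𝔭 ↔ ∀ v ∈ 𝔥, Q x v = 0)
    (P : 𝔨 →ₗ[ℝ] 𝔭) (hP₁ : ∀ x : 𝔭, P (x : 𝔨) = x) (hP₂ : ∀ x : 𝔨, x - (P x : 𝔨) ∈ 𝔥)
    (G : 𝔭 →ₗ[ℝ] 𝔭)
    (hGsa : ∀ x y : 𝔭, Q (G x : 𝔨) (y : 𝔨) = Q (x : 𝔨) (G y : 𝔨))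
    (hGad : ∀ v ∈ 𝔥, ∀ x : 𝔭, G (P ⁅v, (x : 𝔨)⁆) = P ⁅v, (G x : 𝔨)⁆)
    (Ginv : 𝔭 →ₗ[ℝ] 𝔭) (hGinv : ∀ x : 𝔭, Ginv (G x) = x ∧ G (Ginv x) = x)
    (lam : ℝ) (hlam : 0 < lam)
    (hmin : ∀ u : 𝔭, lam * Q (u : 𝔨) (u : 𝔨) ≤ Q (G u : 𝔨) (u : 𝔨))
    (x : 𝔭) (hx : G x = lam • x)
    (z : 𝔭) (hind : LinearIndependent ℝ ![x, z])
    (hxz : ⁅(x : 𝔨), (z : 𝔨)⁆ = 0) :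
    LinearIndependent ℝ ![x, Ginv z] ∧ kappa Q P G Ginv x (Ginv z) ≤ 0 := by
  have hGz : G (Ginv z) = z := (hGinv z).2
  have hxGy : ⁅(x : 𝔨), (G (Ginv z) : 𝔨)⁆ = 0 := by rwa [hGz]
  have hQnn : ∀ a : 𝔨, 0 ≤ Q a a := fun a => by
    rcases eq_or_ne a 0 with rfl | ha
    · simp
    · exact (hQpos a ha).le
  exact ⟨LinearIndependent.pair_of_apply_eq_smul G hlam.ne' hx hGz hind,
    kappa_nonpos_of_lie_apply_eq_zero Q hQsymm hQnn hP₁ (fun a => (hGinv a).2) hlam.le hmin hx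
      hxGy (lie_mem_of_lie_apply_eq_zero Q hQad h𝔭 hP₂ hGsa hGad hlam.ne' hx hxGy)⟩

/-- Suppose `λ > 0` is the smallest eigenvalue of `G` in the sense that
`Q(Gu,u) ≥ λ·Q(u,u)` for all `u ∈ 𝔭`, and let `x ∈ 𝔭` satisfy `Gx = λx`.  If `z ∈ 𝔭` is
linearly independent from `x` with `[x,z] = 0` and we set `y = G⁻¹z`, then `x` and `y` are
linearly independent and `κ(x,y) ≤ 0` (x and y generate a plane of non-positive curvature
in `K/H`). -/
theorem kappa_nonpos_of_smallest_eigenvector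
    (𝔨 : Type*) [LieRing 𝔨] [LieAlgebra ℝ 𝔨] [FiniteDimensional ℝ 𝔨]
    (Q : 𝔨 →ₗ[ℝ] 𝔨 →ₗ[ℝ] ℝ)
    (hQsymm : ∀ x y : 𝔨, Q x y = Q y x)
    (hQpos : ∀ x : 𝔨, x ≠ 0 → 0 < Q x x)
    (hQad : ∀ z x y : 𝔨, Q ⁅z, x⁆ y = - Q x ⁅z, y⁆)
    (𝔥 : LieSubalgebra ℝ 𝔨)
    (𝔭 : Submodule ℝ 𝔨) (h𝔭 : ∀ x : 𝔨, x ∈ 𝔭 ↔ ∀ v ∈ 𝔥, Q x v = 0)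
    (P : 𝔨 →ₗ[ℝ] 𝔭) (hP₁ : ∀ x : 𝔭, P (x : 𝔨) = x) (hP₂ : ∀ x : 𝔨, x - (P x : 𝔨) ∈ 𝔥)
    (G : 𝔭 →ₗ[ℝ] 𝔭)
    (hGsa : ∀ x y : 𝔭, Q (G x : 𝔨) (y : 𝔨) = Q (x : 𝔨) (G y : 𝔨))
    (hGpd : ∀ x : 𝔭, x ≠ 0 → 0 < Q (G x : 𝔨) (x : 𝔨))
    (hGad : ∀ v ∈ 𝔥, ∀ x : 𝔭, G (P ⁅v, (x : 𝔨)⁆) = P ⁅v, (G x : 𝔨)⁆)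
    (Ginv : 𝔭 →ₗ[ℝ] 𝔭) (hGinv : ∀ x : 𝔭, Ginv (G x) = x ∧ G (Ginv x) = x)
    (lam : ℝ) (hlam : 0 < lam)
    (hmin : ∀ u : 𝔭, lam * Q (u : 𝔨) (u : 𝔨) ≤ Q (G u : 𝔨) (u : 𝔨))
    (x : 𝔭) (hx : G x = lam • x)
    (z : 𝔭) (hind : LinearIndependent ℝ ![x, z])
    (hxz : ⁅(x : 𝔨), (z : 𝔨)⁆ = 0) :
    LinearIndependent ℝ ![x, Ginv z] ∧ kappa Q P G Ginv x (Ginv z) ≤ 0 :=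
  kappa_nonpos_of_smallest_eigenvector_general 𝔨 Q hQsymm hQpos hQad 𝔥 𝔭 h𝔭 P hP₁ hP₂ G hGsa hGad
    Ginv hGinv lam hlam hmin x hx z hind hxz
end

section
/- If x,y ∈ 𝔭 are eigenvectors of G for distinct eigenvalues (Gx = λ₁x, Gy = λ₂y, λ₁ ≠ λ₂) and the bracket [x,y] lies in 𝔥 (i.e. is orthogonal to 𝔭), then [x,y] = 0. (This is the closing step of the paper's G₂ argument: B₊(x,y) = (1/2)(λ₂-λ₁)[x,y] must lie in 𝔭, forcing [x,y] = 0.) -/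
/-!
Put `z = [x, y] ∈ 𝔥`. By invariance `Q(z, z) = Q(y, [z, x])`, and since `y ∈ 𝔭 ⊥ 𝔥` this equals
`Q(y, P[z, x])`. As `G` commutes with `P ∘ ad z`, the vector `P[z, x]` is again a `G`-eigenvector
with eigenvalue `λ₁`, so it is `Q`-orthogonal to the `λ₂`-eigenvector `y`. Hence `Q(z, z) = 0`.
-/

theorem LinearMap.IsSelfAdjoint.apply_eq_zero_of_eigenvalue_ne {R M : Type*} [CommRing R]
    [IsDomain R] [AddCommGroup M] [Module R M] {B : M →ₗ[R] M →ₗ[R] R} {G : M → M}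
    (hG : B.IsSelfAdjoint G) {x y : M} {a b : R} (hx : G x = a • x) (hy : G y = b • y)
    (hab : a ≠ b) : B x y = 0 := by
  have h := hG x y
  rw [hx, hy, map_smul, map_smul, LinearMap.smul_apply, smul_eq_mul, smul_eq_mul] at h
  by_contra hxy
  exact hab (mul_right_cancel₀ hxy h)

theorem apply_lie_eq_apply_lie_of_invariant {R L : Type*} [CommRing R] [LieRing L]
    [Module R L] (Q : L →ₗ[R] L →ₗ[R] R) (hQ : ∀ z x y : L, Q ⁅z, x⁆ y = -Q x ⁅z, y⁆)
    (x y z : L) : Q ⁅x, y⁆ z = Q y ⁅z, x⁆ := by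
  rw [hQ, ← lie_skew, map_neg, neg_neg]

theorem bracket_eq_zero_of_distinct_eigenvalues_of_bracket_mem_general
    (𝔨 : Type*) [LieRing 𝔨] [LieAlgebra ℝ 𝔨]
    (Q : 𝔨 →ₗ[ℝ] 𝔨 →ₗ[ℝ] ℝ)
    (hQpos : ∀ x : 𝔨, x ≠ 0 → 0 < Q x x)
    (hQad : ∀ z x y : 𝔨, Q ⁅z, x⁆ y = - Q x ⁅z, y⁆)
    (𝔥 : LieSubalgebra ℝ 𝔨)
    (𝔭 : Submodule ℝ 𝔨) (h𝔭 : ∀ x : 𝔨, x ∈ 𝔭 ↔ ∀ v ∈ 𝔥, Q x v = 0)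
    (P : 𝔨 →ₗ[ℝ] 𝔭) (hP₂ : ∀ x : 𝔨, x - (P x : 𝔨) ∈ 𝔥)
    (G : 𝔭 →ₗ[ℝ] 𝔭)
    (hGsa : ∀ x y : 𝔭, Q (G x : 𝔨) (y : 𝔨) = Q (x : 𝔨) (G y : 𝔨))
    (hGad : ∀ v ∈ 𝔥, ∀ x : 𝔭, G (P ⁅v, (x : 𝔨)⁆) = P ⁅v, (G x : 𝔨)⁆)
    (x y : 𝔭) (lam₁ lam₂ : ℝ) (hne : lam₁ ≠ lam₂)
    (hx : G x = lam₁ • x) (hy : G y = lam₂ • y)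
    (hmem : ⁅(x : 𝔨), (y : 𝔨)⁆ ∈ 𝔥) :
    ⁅(x : 𝔨), (y : 𝔨)⁆ = 0 := by
  set z : 𝔨 := ⁅(x : 𝔨), (y : 𝔨)⁆
  have hG_proj : G (P ⁅z, (x : 𝔨)⁆) = lam₁ • P ⁅z, (x : 𝔨)⁆ := by
    rw [hGad z hmem x, hx, Submodule.coe_smul, lie_smul, map_smul]
  have hy_proj : Q y (P ⁅z, (x : 𝔨)⁆ : 𝔭) = 0 :=
    LinearMap.IsSelfAdjoint.apply_eq_zero_of_eigenvalue_ne (B := Q.compl₁₂ 𝔭.subtype 𝔭.subtype)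
      hGsa hy hG_proj hne.symm
  have hzz : Q z z = 0 := calc
    Q z z = Q y ⁅z, (x : 𝔨)⁆ := apply_lie_eq_apply_lie_of_invariant Q hQad _ _ _
    _ = Q y (P ⁅z, (x : 𝔨)⁆ : 𝔭) :=
      sub_eq_zero.mp <| (map_sub _ _ _).symm.trans <| (h𝔭 y).mp y.2 _ (hP₂ _)
    _ = 0 := hy_proj
  by_contra hz
  exact (hQpos z hz).ne' hzz

/-- If `x,y ∈ 𝔭` are eigenvectors of `G` for distinct eigenvalues
(`Gx = λ₁x`, `Gy = λ₂y`, `λ₁ ≠ λ₂`) and the bracket `[x,y]` lies in `𝔥` (i.e. is orthogonal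
to `𝔭`), then `[x,y] = 0`.  (Closing step of the paper's `G₂` argument:
`B₊(x,y) = (1/2)(λ₂-λ₁)[x,y]` must lie in `𝔭`, forcing `[x,y] = 0`.) -/
theorem bracket_eq_zero_of_distinct_eigenvalues_of_bracket_mem
    (𝔨 : Type*) [LieRing 𝔨] [LieAlgebra ℝ 𝔨] [FiniteDimensional ℝ 𝔨]
    (Q : 𝔨 →ₗ[ℝ] 𝔨 →ₗ[ℝ] ℝ)
    (hQsymm : ∀ x y : 𝔨, Q x y = Q y x)
    (hQpos : ∀ x : 𝔨, x ≠ 0 → 0 < Q x x)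
    (hQad : ∀ z x y : 𝔨, Q ⁅z, x⁆ y = - Q x ⁅z, y⁆)
    (𝔥 : LieSubalgebra ℝ 𝔨)
    (𝔭 : Submodule ℝ 𝔨) (h𝔭 : ∀ x : 𝔨, x ∈ 𝔭 ↔ ∀ v ∈ 𝔥, Q x v = 0)
    (P : 𝔨 →ₗ[ℝ] 𝔭) (hP₁ : ∀ x : 𝔭, P (x : 𝔨) = x) (hP₂ : ∀ x : 𝔨, x - (P x : 𝔨) ∈ 𝔥)
    (G : 𝔭 →ₗ[ℝ] 𝔭)
    (hGsa : ∀ x y : 𝔭, Q (G x : 𝔨) (y : 𝔨) = Q (x : 𝔨) (G y : 𝔨))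
    (hGpd : ∀ x : 𝔭, x ≠ 0 → 0 < Q (G x : 𝔨) (x : 𝔨))
    (hGad : ∀ v ∈ 𝔥, ∀ x : 𝔭, G (P ⁅v, (x : 𝔨)⁆) = P ⁅v, (G x : 𝔨)⁆)
    (x y : 𝔭) (lam₁ lam₂ : ℝ) (hne : lam₁ ≠ lam₂)
    (hx : G x = lam₁ • x) (hy : G y = lam₂ • y)
    (hmem : ⁅(x : 𝔨), (y : 𝔨)⁆ ∈ 𝔥) :
    ⁅(x : 𝔨), (y : 𝔨)⁆ = 0 :=
  bracket_eq_zero_of_distinct_eigenvalues_of_bracket_mem_general 𝔨 Q hQpos hQad 𝔥 𝔭 h𝔭 P hP₂ G hGsa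
    hGad x y lam₁ lam₂ hne hx hy hmem
end
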